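/- Let s > 0 and θ ∈ (0, π/2), and let D = {(r cos v, r sin v) : r ≥ 0, v ∈ [0, θ]} ⊆ ℝ². Define F : ℝ² → ℝ by F(w_x, w_y) = ∫_D (2πs)^{−1} exp(−((x − w_x)² + (y − w_y)²)/(2s)) dx dy. Then F is differentiable and, for every (w_x, w_y), ∂F/∂w_y (w_x, w_y) = [exp(−w_y²/(2s))/√(2πs)]·Φ(w_x/√s) − [exp(−(w_x tan θ − w_y)²/(2s(1 + tan²θ)))/√(2πs(1 + tan²θ))]·Φ((w_x + w_y tan θ)/√(s(1 + tan²θ))), where Φ is the standard normal distribution function. -/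

import Mathlib

/-!
Differentiating under the integral sign, with a Gaussian majorant valid uniformly for `w` in a
unit ball, gives `∂F/∂w_y = ∫_D p(z - w) (z_y - w_y) / s dz` for the heat kernel `p`. The cone is
the wedge `0 ≤ y ≤ x tan θ`, and for fixed `x` the integrand is an exact `y`-derivative, so by
Fubini only the values of `p` on the two edges `y = 0` and `y = x tan θ` survive. After completing
the square these are Gaussians in `x`, whose integrals over `x > 0` are values of `Φ`.
-/

open MeasureTheory Real

/-- The standard normal distribution function Φ. -/
noncomputable def stdNormalCDF (y : ℝ) : ℝ :=
  ∫ z in Set.Iic y, (Real.sqrt (2 * Real.pi))⁻¹ * Real.exp (-z ^ 2 / 2)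

open Set

variable {s : ℝ}

def wedge (t : ℝ) : Set (ℝ × ℝ) := {p | p.2 ∈ Icc 0 (p.1 * t)}

lemma polarCone_eq_wedge_tan {θ : ℝ} (hθ₀ : 0 < θ) (hθ : θ < π / 2) :
    {p : ℝ × ℝ | ∃ r ≥ (0 : ℝ), ∃ v ∈ Icc (0 : ℝ) θ, p = (r * cos v, r * sin v)}
      = wedge (tan θ) := by
  ext ⟨x, y⟩
  simp only [wedge, mem_ofPred_eq, mem_Icc, Prod.mk.injEq]
  constructor
  · rintro ⟨r, hr, v, ⟨hv₀, hvθ⟩, rfl, rfl⟩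
    have hcos : 0 < cos v := cos_pos_of_mem_Ioo ⟨by linarith, by linarith⟩
    have htan : tan v ≤ tan θ := strictMonoOn_tan.monotoneOn
      ⟨by linarith, by linarith⟩ ⟨by linarith, hθ⟩ hvθ
    have hsin : sin v = cos v * tan v := by rw [tan_eq_sin_div_cos]; field_simp
    refine ⟨mul_nonneg hr (sin_nonneg_of_nonneg_of_le_pi hv₀ (by linarith)), ?_⟩
    rw [hsin, ← mul_assoc]
    exact mul_le_mul_of_nonneg_left htan (by positivity)
  · rintro ⟨hy₀, hyx⟩
    have htθ : 0 < tan θ := tan_pos_of_pos_of_lt_pi_div_two hθ₀ hθ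
    rcases le_or_gt x 0 with hx | hx
    · have hy : y = 0 := le_antisymm (hyx.trans (mul_nonpos_of_nonpos_of_nonneg hx htθ.le)) hy₀
      have hx : x = 0 := by nlinarith
      exact ⟨0, le_rfl, 0, ⟨le_rfl, hθ₀.le⟩, by simp [hx], by simp [hy]⟩
    -- polar coordinates: angle `arctan (y / x)`, radius `x / cos (arctan (y / x))`
    have hu : y / x ≤ tan θ := (div_le_iff₀ hx).2 (by linarith)
    refine ⟨x * √(1 + (y / x) ^ 2), by positivity, arctan (y / x),
      ⟨arctan_nonneg.2 (by positivity), ?_⟩, ?_, ?_⟩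
    · calc arctan (y / x) ≤ arctan (tan θ) := arctan_le_arctan_iff.2 hu
        _ = θ := arctan_tan (by linarith) hθ
    · rw [cos_arctan]; field_simp
    · rw [sin_arctan]; field_simp

lemma setIntegral_wedge_eq_integral_Ioi {E : Type*} [NormedAddCommGroup E] [NormedSpace ℝ E]
    {t : ℝ} (ht : 0 ≤ t) {f : ℝ × ℝ → E} (hf : IntegrableOn f (wedge t)) :
    ∫ p in wedge t, f p = ∫ x in Ioi 0, ∫ y in Icc 0 (x * t), f (x, y) := by
  have hW : MeasurableSet (wedge t) :=
    (measurableSet_le measurable_const measurable_snd).inter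
      (measurableSet_le measurable_snd (measurable_fst.mul_const t))
  rw [← integral_indicator hW, Measure.volume_eq_prod,
    integral_prod _ ((integrable_indicator_iff hW).2 hf)]
  have hsection (x : ℝ) : ∫ y, (wedge t).indicator f (x, y)
      = ∫ y in Icc 0 (x * t), f (x, y) :=
    integral_indicator (f := fun y => f (x, y)) (s := Icc 0 (x * t)) measurableSet_Icc
  simp only [hsection]
  refine (setIntegral_eq_integral_of_forall_compl_eq_zero fun x hx => ?_).symm
  refine setIntegral_measure_zero _ ?_
  rw [Real.volume_Icc, ENNReal.ofReal_eq_zero, sub_zero]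
  exact mul_nonpos_of_nonpos_of_nonneg (not_lt.1 hx) ht

lemma integrable_exp_neg_sub_sq_div (m : ℝ) {c : ℝ} (hc : 0 < c) :
    Integrable (fun x : ℝ => exp (-(x - m) ^ 2 / c)) := by
  convert (integrable_exp_neg_mul_sq (inv_pos.2 hc)).comp_sub_right m using 2 with x
  ring_nf

lemma exp_neg_add_sq_div (u v c : ℝ) :
    exp (-(u ^ 2 + v ^ 2) / c) = exp (-u ^ 2 / c) * exp (-v ^ 2 / c) := by
  rw [← exp_add]; ring_nf

lemma add_one_mul_exp_neg_sq_le {u a : ℝ} (hs : 0 < s) (h : |u - a| ≤ 1) :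
    (|u| + 1) * exp (-u ^ 2 / (2 * s)) ≤ exp (s + 1 / (4 * s)) * exp (-a ^ 2 / (8 * s)) := by
  rw [← exp_add]
  refine (mul_le_mul_of_nonneg_right (add_one_le_exp |u|) (exp_pos _).le).trans ?_
  rw [← exp_add, exp_le_exp, ← sub_nonneg]
  have hua : (u - a) ^ 2 ≤ 1 := by nlinarith [sq_abs (u - a), abs_nonneg (u - a)]
  have key : s + 1 / (4 * s) + -a ^ 2 / (8 * s) - (|u| + -u ^ 2 / (2 * s))
      = (2 * (|u| - 2 * s) ^ 2 + (2 * u - a) ^ 2 + 2 * (1 - (u - a) ^ 2)) / (8 * s) := by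
    field_simp
    linear_combination (-16) * sq_abs u
  rw [key]
  exact div_nonneg (by nlinarith [sq_nonneg (|u| - 2 * s), sq_nonneg (2 * u - a)]) (by positivity)

lemma integral_Ioi_exp_neg_sub_sq_div (μ : ℝ) {σ : ℝ} (hσ : 0 < σ) :
    ∫ x in Ioi 0, exp (-(x - μ) ^ 2 / (2 * σ)) = √(2 * π * σ) * stdNormalCDF (μ / √σ) := by
  have hσ' : 0 < √σ := sqrt_pos.2 hσ
  have himage : (fun z => μ - √σ * z) '' Iic (μ / √σ) = Ici 0 := by
    rw [← image_image (μ - ·) (√σ * ·), image_mul_left_Iic hσ', image_const_sub_Iic,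
      mul_div_cancel₀ _ hσ'.ne', sub_self]
  have hderiv (z : ℝ) : HasDerivAt (fun z => μ - √σ * z) (-√σ) z := by
    simpa using ((hasDerivAt_id z).const_mul √σ).const_sub μ
  have hinj : (fun z => μ - √σ * z).Injective := fun a b h => by
    simpa [hσ'.ne'] using h
  rw [← integral_Ici_eq_integral_Ioi, ← himage, integral_image_eq_integral_abs_deriv_smul
    measurableSet_Iic (fun z _ => (hderiv z).hasDerivWithinAt) hinj.injOn]
  have hexp (z : ℝ) : exp (-(μ - √σ * z - μ) ^ 2 / (2 * σ)) = exp (-z ^ 2 / 2) := by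
    congr 1
    rw [sub_sub_cancel_left, neg_sq, mul_pow, sq_sqrt hσ.le]
    field_simp
  simp only [abs_neg, abs_of_pos hσ', smul_eq_mul, hexp, integral_const_mul, stdNormalCDF]
  rw [sqrt_mul (by positivity)]
  field_simp

lemma hasDerivAt_exp_neg_sub_sq_div (hs : s ≠ 0) (b y : ℝ) :
    HasDerivAt (fun y => exp (-(y - b) ^ 2 / (2 * s)))
      (-(exp (-(y - b) ^ 2 / (2 * s)) * ((y - b) / s))) y := by
  have h := ((((hasDerivAt_id' y).sub_const b).pow 2).neg.div_const (2 * s)).exp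
  refine h.congr_deriv ?_
  simp only [Pi.neg_apply, Pi.pow_apply, Nat.cast_ofNat]
  field_simp
  ring

lemma integral_Icc_exp_neg_sub_sq_div_mul (hs : s ≠ 0) (b : ℝ) {a : ℝ} (ha : 0 ≤ a) :
    ∫ y in Icc 0 a, exp (-(y - b) ^ 2 / (2 * s)) * ((y - b) / s)
      = exp (-b ^ 2 / (2 * s)) - exp (-(a - b) ^ 2 / (2 * s)) := by
  rw [integral_Icc_eq_integral_Ioc, ← intervalIntegral.integral_of_le ha,
    intervalIntegral.integral_eq_sub_of_hasDerivAt
      (fun y _ => by simpa using (hasDerivAt_exp_neg_sub_sq_div hs b y).neg)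
      (Continuous.intervalIntegrable (by fun_prop) _ _)]
  simp only [Pi.neg_apply, zero_sub, neg_sq]
  ring

lemma exp_neg_sub_sq_mul_exp_neg_mul_sub_sq (hs : s ≠ 0) (t a b x : ℝ) :
    exp (-(x - a) ^ 2 / (2 * s)) * exp (-(x * t - b) ^ 2 / (2 * s))
      = exp (-(a * t - b) ^ 2 / (2 * s * (1 + t ^ 2)))
        * exp (-(x - (a + b * t) / (1 + t ^ 2)) ^ 2 / (2 * (s / (1 + t ^ 2)))) := by
  rw [← exp_add, ← exp_add]
  congr 1
  field_simp
  ring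

lemma integral_Ioi_exp_neg_sub_sq_mul_exp_neg_mul_sub_sq (hs : 0 < s) (t a b : ℝ) :
    ∫ x in Ioi 0, exp (-(x - a) ^ 2 / (2 * s)) * exp (-(x * t - b) ^ 2 / (2 * s))
      = exp (-(a * t - b) ^ 2 / (2 * s * (1 + t ^ 2))) * √(2 * π * (s / (1 + t ^ 2)))
        * stdNormalCDF ((a + b * t) / √(s * (1 + t ^ 2))) := by
  have hK : 0 < 1 + t ^ 2 := by positivity
  simp only [exp_neg_sub_sq_mul_exp_neg_mul_sub_sq hs.ne', integral_const_mul,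
    integral_Ioi_exp_neg_sub_sq_div _ (div_pos hs hK)]
  have harg : (a + b * t) / (1 + t ^ 2) / √(s / (1 + t ^ 2))
      = (a + b * t) / √(s * (1 + t ^ 2)) := by
    rw [sqrt_div hs.le, sqrt_mul hs.le]
    field_simp
    rw [sq_sqrt hK.le]
  rw [harg]
  ring

lemma norm_smul_fst_add_smul_snd_le {𝕜 E : Type*} [NontriviallyNormedField 𝕜]
    [SeminormedAddCommGroup E] [NormedSpace 𝕜 E] (a b : 𝕜) :
    ‖a • ContinuousLinearMap.fst 𝕜 E E + b • ContinuousLinearMap.snd 𝕜 E E‖ ≤ ‖a‖ + ‖b‖ := by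
  refine (norm_add_le _ _).trans (add_le_add ?_ ?_) <;> rw [norm_smul]
  · exact mul_le_of_le_one_right (norm_nonneg a) (ContinuousLinearMap.norm_fst_le 𝕜 E E)
  · exact mul_le_of_le_one_right (norm_nonneg b) (ContinuousLinearMap.norm_snd_le 𝕜 E E)

noncomputable def gaussianKernel (s : ℝ) (z w : ℝ × ℝ) : ℝ :=
  (2 * π * s)⁻¹ * exp (-((z.1 - w.1) ^ 2 + (z.2 - w.2) ^ 2) / (2 * s))

noncomputable def gaussianKernelFDeriv (s : ℝ) (z w : ℝ × ℝ) : ℝ × ℝ →L[ℝ] ℝ :=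
  gaussianKernel s z w • (((z.1 - w.1) / s) • ContinuousLinearMap.fst ℝ ℝ ℝ
    + ((z.2 - w.2) / s) • ContinuousLinearMap.snd ℝ ℝ ℝ)

lemma gaussianKernel_eq_mul (z w : ℝ × ℝ) :
    gaussianKernel s z w
      = (2 * π * s)⁻¹ * (exp (-(z.1 - w.1) ^ 2 / (2 * s)) * exp (-(z.2 - w.2) ^ 2 / (2 * s))) := by
  rw [gaussianKernel, exp_neg_add_sq_div]

lemma gaussianKernel_nonneg (hs : 0 ≤ s) (z w : ℝ × ℝ) : 0 ≤ gaussianKernel s z w := by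
  unfold gaussianKernel; positivity

lemma gaussianKernelFDeriv_apply (z w v : ℝ × ℝ) :
    gaussianKernelFDeriv s z w v
      = gaussianKernel s z w * ((z.1 - w.1) / s * v.1 + (z.2 - w.2) / s * v.2) := by
  simp [gaussianKernelFDeriv, mul_add]

lemma continuous_gaussianKernel (w : ℝ × ℝ) : Continuous (gaussianKernel s · w) := by
  unfold gaussianKernel; fun_prop

lemma continuous_gaussianKernelFDeriv (w : ℝ × ℝ) :
    Continuous (gaussianKernelFDeriv s · w) := by
  unfold gaussianKernelFDeriv gaussianKernel; fun_prop

lemma hasFDerivAt_gaussianKernel (hs : s ≠ 0) (z w : ℝ × ℝ) :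
    HasFDerivAt (gaussianKernel s z) (gaussianKernelFDeriv s z w) w := by
  have hq : HasFDerivAt (fun w : ℝ × ℝ => -((z.1 - w.1) ^ 2 + (z.2 - w.2) ^ 2)) _ w :=
    ((((hasFDerivAt_fst (𝕜 := ℝ) (p := w)).const_sub z.1).pow 2).add
      (((hasFDerivAt_snd (𝕜 := ℝ) (p := w)).const_sub z.2).pow 2)).neg
  have h := ((hq.mul_const (2 * s)⁻¹).exp).const_mul (2 * π * s)⁻¹
  simp only [← div_eq_mul_inv] at h
  refine h.congr_fderiv (ContinuousLinearMap.ext fun v => ?_)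
  simp only [gaussianKernelFDeriv_apply, gaussianKernel, smul_apply, add_apply, neg_apply,
    ContinuousLinearMap.coe_fst', ContinuousLinearMap.coe_snd', smul_eq_mul, nsmul_eq_mul]
  field_simp
  ring

lemma integrable_gaussianKernel (hs : 0 < s) (w : ℝ × ℝ) : Integrable (gaussianKernel s · w) := by
  simp_rw [gaussianKernel_eq_mul]
  exact ((integrable_exp_neg_sub_sq_div w.1 (by positivity)).mul_prod
    (integrable_exp_neg_sub_sq_div w.2 (by positivity))).const_mul _

lemma norm_gaussianKernelFDeriv_le (hs : 0 < s) (z : ℝ × ℝ) {w w₀ : ℝ × ℝ} (hw : dist w w₀ < 1) :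
    ‖gaussianKernelFDeriv s z w‖ ≤ (2 * π * s)⁻¹ / s * exp (s + 1 / (4 * s)) ^ 2
      * (exp (-(z.1 - w₀.1) ^ 2 / (8 * s)) * exp (-(z.2 - w₀.2) ^ 2 / (8 * s))) := by
  rw [Prod.dist_eq, max_lt_iff, dist_comm w.1, dist_comm w.2] at hw
  have h₁ := add_one_mul_exp_neg_sq_le hs (u := z.1 - w.1) (a := z.1 - w₀.1)
    (by rw [sub_sub_sub_cancel_left, ← Real.dist_eq]; exact hw.1.le)
  have h₂ := add_one_mul_exp_neg_sq_le hs (u := z.2 - w.2) (a := z.2 - w₀.2)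
    (by rw [sub_sub_sub_cancel_left, ← Real.dist_eq]; exact hw.2.le)
  have hL := norm_smul_fst_add_smul_snd_le (E := ℝ) ((z.1 - w.1) / s) ((z.2 - w.2) / s)
  rw [Real.norm_eq_abs, Real.norm_eq_abs, abs_div, abs_div, abs_of_pos hs] at hL
  set u₁ := |z.1 - w.1|
  set u₂ := |z.2 - w.2|
  calc ‖gaussianKernelFDeriv s z w‖
      ≤ gaussianKernel s z w * (u₁ / s + u₂ / s) := by
        have hk := gaussianKernel_nonneg hs.le z w
        rw [gaussianKernelFDeriv, norm_smul, Real.norm_of_nonneg hk]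
        gcongr
    _ = (2 * π * s)⁻¹ / s * (exp (-(z.1 - w.1) ^ 2 / (2 * s)) * exp (-(z.2 - w.2) ^ 2 / (2 * s)))
          * (u₁ + u₂) := by
        rw [gaussianKernel_eq_mul]; ring
    _ ≤ (2 * π * s)⁻¹ / s * (exp (-(z.1 - w.1) ^ 2 / (2 * s)) * exp (-(z.2 - w.2) ^ 2 / (2 * s)))
          * ((u₁ + 1) * (u₂ + 1)) := by
        gcongr
        nlinarith [abs_nonneg (z.1 - w.1), abs_nonneg (z.2 - w.2)]
    _ = (2 * π * s)⁻¹ / s * (((u₁ + 1) * exp (-(z.1 - w.1) ^ 2 / (2 * s)))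
          * ((u₂ + 1) * exp (-(z.2 - w.2) ^ 2 / (2 * s)))) := by ring
    _ ≤ (2 * π * s)⁻¹ / s * ((exp (s + 1 / (4 * s)) * exp (-(z.1 - w₀.1) ^ 2 / (8 * s)))
          * (exp (s + 1 / (4 * s)) * exp (-(z.2 - w₀.2) ^ 2 / (8 * s)))) := by gcongr
    _ = _ := by ring

lemma exists_integrable_bound_gaussianKernelFDeriv (hs : 0 < s) (w₀ : ℝ × ℝ) :
    ∃ bound : ℝ × ℝ → ℝ, Integrable bound ∧
      ∀ z, ∀ w ∈ Metric.ball w₀ 1, ‖gaussianKernelFDeriv s z w‖ ≤ bound z :=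
  ⟨_, ((integrable_exp_neg_sub_sq_div w₀.1 (by positivity)).mul_prod
    (integrable_exp_neg_sub_sq_div w₀.2 (by positivity))).const_mul _,
    fun z _ hw => norm_gaussianKernelFDeriv_le hs z hw⟩

lemma integrable_gaussianKernelFDeriv (hs : 0 < s) (w : ℝ × ℝ) :
    Integrable (gaussianKernelFDeriv s · w) := by
  obtain ⟨bound, hint, hle⟩ := exists_integrable_bound_gaussianKernelFDeriv hs w
  exact hint.mono' (continuous_gaussianKernelFDeriv w).aestronglyMeasurable
    (ae_of_all _ fun z => hle z w (Metric.mem_ball_self one_pos))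

lemma hasFDerivAt_setIntegral_gaussianKernel (hs : 0 < s) (D : Set (ℝ × ℝ)) (w₀ : ℝ × ℝ) :
    HasFDerivAt (fun w => ∫ z in D, gaussianKernel s z w)
      (∫ z in D, gaussianKernelFDeriv s z w₀) w₀ := by
  obtain ⟨bound, hint, hle⟩ := exists_integrable_bound_gaussianKernelFDeriv hs w₀
  exact hasFDerivAt_integral_of_dominated_of_fderiv_le (Metric.ball_mem_nhds w₀ one_pos)
    (Filter.Eventually.of_forall fun w => (continuous_gaussianKernel w).aestronglyMeasurable)
    (integrable_gaussianKernel hs w₀).integrableOn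
    (continuous_gaussianKernelFDeriv w₀).aestronglyMeasurable
    (ae_of_all _ fun z w hw => hle z w hw) hint.integrableOn
    (ae_of_all _ fun z w _ => hasFDerivAt_gaussianKernel hs.ne' z w)

lemma hasDerivAt_setIntegral_gaussianKernel_snd (hs : 0 < s) (D : Set (ℝ × ℝ)) (a b : ℝ) :
    HasDerivAt (fun b => ∫ z in D, gaussianKernel s z (a, b))
      (∫ z in D, gaussianKernel s z (a, b) * ((z.2 - b) / s)) b := by
  have h := (hasFDerivAt_setIntegral_gaussianKernel hs D (a, b)).comp_hasDerivAt b
    ((hasDerivAt_const b a).prodMk (hasDerivAt_id b))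
  rw [ContinuousLinearMap.integral_apply (integrable_gaussianKernelFDeriv hs (a, b)).integrableOn]
    at h
  simp only [gaussianKernelFDeriv_apply, mul_zero, mul_one, zero_add] at h
  exact h

lemma integral_wedge_gaussianKernel_mul (hs : 0 < s) {t : ℝ} (ht : 0 ≤ t) (a b : ℝ) :
    ∫ z in wedge t, gaussianKernel s z (a, b) * ((z.2 - b) / s)
      = exp (-b ^ 2 / (2 * s)) / √(2 * π * s) * stdNormalCDF (a / √s)
        - exp (-(a * t - b) ^ 2 / (2 * s * (1 + t ^ 2))) / √(2 * π * s * (1 + t ^ 2))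
          * stdNormalCDF ((a + b * t) / √(s * (1 + t ^ 2))) := by
  have hK : 0 < 1 + t ^ 2 := by positivity
  have hint : IntegrableOn (fun z => gaussianKernel s z (a, b) * ((z.2 - b) / s)) (wedge t) := by
    have h := (ContinuousLinearMap.apply ℝ ℝ ((0 : ℝ), (1 : ℝ))).integrable_comp
      (integrable_gaussianKernelFDeriv hs (a, b))
    simp only [ContinuousLinearMap.apply_apply, gaussianKernelFDeriv_apply,
      mul_zero, mul_one, zero_add] at h
    exact h.integrableOn
  have hinner : ∀ x ∈ Ioi (0 : ℝ),
      ∫ y in Icc 0 (x * t), gaussianKernel s (x, y) (a, b) * ((y - b) / s)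
        = (2 * π * s)⁻¹ * (exp (-b ^ 2 / (2 * s)) * exp (-(x - a) ^ 2 / (2 * s))
          - exp (-(x - a) ^ 2 / (2 * s)) * exp (-(x * t - b) ^ 2 / (2 * s))) := by
    intro x hx
    simp only [gaussianKernel_eq_mul, mul_assoc, integral_const_mul]
    rw [integral_Icc_exp_neg_sub_sq_div_mul hs.ne' b (mul_nonneg (le_of_lt hx) ht)]
    ring
  have hint₁ : Integrable fun x => exp (-b ^ 2 / (2 * s)) * exp (-(x - a) ^ 2 / (2 * s)) :=
    (integrable_exp_neg_sub_sq_div a (by positivity)).const_mul _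
  have hint₂ : Integrable fun x =>
      exp (-(x - a) ^ 2 / (2 * s)) * exp (-(x * t - b) ^ 2 / (2 * s)) := by
    simp only [exp_neg_sub_sq_mul_exp_neg_mul_sub_sq hs.ne']
    exact (integrable_exp_neg_sub_sq_div _ (by positivity)).const_mul _
  rw [setIntegral_wedge_eq_integral_Ioi ht hint, setIntegral_congr_fun measurableSet_Ioi hinner,
    integral_const_mul, integral_sub hint₁.integrableOn hint₂.integrableOn, integral_const_mul,
    integral_Ioi_exp_neg_sub_sq_div a hs, integral_Ioi_exp_neg_sub_sq_mul_exp_neg_mul_sub_sq hs]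
  have h₁ : (2 * π * s)⁻¹ * √(2 * π * s) = (√(2 * π * s))⁻¹ := by
    rw [inv_mul_eq_div, sqrt_div_self]
  have h₂ : (2 * π * s)⁻¹ * √(2 * π * (s / (1 + t ^ 2))) = (√(2 * π * s * (1 + t ^ 2)))⁻¹ := by
    rw [← mul_div_assoc, sqrt_div' _ hK.le, ← mul_div_assoc, h₁, div_eq_mul_inv, ← mul_inv,
      ← sqrt_mul (by positivity)]
  linear_combination (exp (-b ^ 2 / (2 * s)) * stdNormalCDF (a / √s)) * h₁
    - (exp (-(a * t - b) ^ 2 / (2 * s * (1 + t ^ 2)))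
      * stdNormalCDF ((a + b * t) / √(s * (1 + t ^ 2)))) * h₂

/-- Explicit formula for the partial derivative in w_y of the Gaussian
probability F(w) = P(w + √s·Z ∈ D) of a cone D of opening angle θ. -/
theorem cone_probability_partial_deriv_wy
    (s θ : ℝ) (hs : 0 < s) (hθ1 : 0 < θ) (hθ2 : θ < Real.pi / 2)
    (D : Set (ℝ × ℝ))
    (hD : D = {p : ℝ × ℝ | ∃ r ≥ (0 : ℝ), ∃ v ∈ Set.Icc (0 : ℝ) θ,
      p = (r * Real.cos v, r * Real.sin v)})
    (F : ℝ × ℝ → ℝ)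
    (hF : ∀ wx wy, F (wx, wy) = ∫ z in D,
      (2 * Real.pi * s)⁻¹ * Real.exp (-((z.1 - wx) ^ 2 + (z.2 - wy) ^ 2) / (2 * s))) :
    Differentiable ℝ F ∧
    ∀ wx wy, deriv (fun a => F (wx, a)) wy =
      Real.exp (-wy ^ 2 / (2 * s)) / Real.sqrt (2 * Real.pi * s)
          * stdNormalCDF (wx / Real.sqrt s)
        - Real.exp (-(wx * Real.tan θ - wy) ^ 2 / (2 * s * (1 + Real.tan θ ^ 2)))
            / Real.sqrt (2 * Real.pi * s * (1 + Real.tan θ ^ 2))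
            * stdNormalCDF ((wx + wy * Real.tan θ)
                / Real.sqrt (s * (1 + Real.tan θ ^ 2))) := by
  obtain rfl : F = fun w => ∫ z in D, gaussianKernel s z w := funext fun w => hF w.1 w.2
  refine ⟨fun w => (hasFDerivAt_setIntegral_gaussianKernel hs D w).differentiableAt,
    fun wx wy => ?_⟩
  rw [(hasDerivAt_setIntegral_gaussianKernel_snd hs D wx wy).deriv, hD,
    polarCone_eq_wedge_tan hθ1 hθ2]
  exact integral_wedge_gaussianKernel_mul hs (tan_pos_of_pos_of_lt_pi_div_two hθ1 hθ2).le wx wy
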